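/- arXiv:math/0105226 — 2 statements merged into one kernel-verified Lean document; each statement's English description precedes it below -/
import Mathlib

section
/- Equivalence of the original box-ball algorithm and the carrier algorithm for the standard BBS: let a be a state of the standard BBS, restricted to an interval [p,q] with p the smallest occupied label and q the largest occupied label plus n. Then the sequence (a_p, ..., a_q) produced by one step of the original box-ball rule coincides with the output of the carrier algorithm applied to (a_p,...,a_q) with initial carrier consisting of n copies of e = n+1, and moreover the final carrier again consists of n copies of e. -/
/-- The letter unloaded when the (sorted) carrier `C` loads `x`: the smallest
letter of `C` strictly greater than `x` if one exists, otherwise the smallest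
letter of `C`. -/
def carrierOut (C : List ℕ) (x : ℕ) : ℕ :=
  match C.filter (fun c => x < c) with
  | [] => C.headI
  | y :: _ => y

/-- The carrier after one loading/unloading step: the output letter is
replaced by `x`, keeping the carrier sorted. -/
def carrierNext (C : List ℕ) (x : ℕ) : List ℕ :=
  List.orderedInsert (· ≤ ·) x (C.erase (carrierOut C x))

/-- The carrier algorithm: process the letters of the input word from left to
right, returning the final carrier together with the output word. -/
def carrierRun : List ℕ → List ℕ → List ℕ × List ℕ
  | C, [] => (C, [])
  | C, x :: w =>
      let r := carrierRun (carrierNext C x) w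
      (r.1, carrierOut C x :: r.2)

/-- A state of the standard box-ball system with `n` balls of distinct colors
`1, …, n`; the value `n + 1` denotes an empty box. Each color occurs in
exactly one box. -/
def BBSState (n : ℕ) (a : ℤ → ℕ) : Prop :=
  (∀ i, 1 ≤ a i ∧ a i ≤ n + 1) ∧ (∀ c, 1 ≤ c → c ≤ n → ∃! i, a i = c)

/-- `f` is the destination map of one step of the box-ball evolution:
for each occupied box `i`, `f i` is the least box `k > i` that is empty or
vacated by a ball of smaller color, and is not the destination of a ball of
smaller color. -/
def IsDest (n : ℕ) (a : ℤ → ℕ) (f : ℤ → ℤ) : Prop :=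
  ∀ i, a i ≤ n →
    IsLeast {k : ℤ | i < k ∧ (a k = n + 1 ∨ a k < a i) ∧
      ∀ j, a j ≤ n → a j < a i → f j ≠ k} (f i)

/-- One step of the box-ball time evolution: each ball moves from its box to
its destination, and all other boxes become empty. -/
def EvolveTo (n : ℕ) (a a' : ℤ → ℕ) : Prop :=
  ∃ f : ℤ → ℤ, IsDest n a f ∧
    (∀ i, a i ≤ n → a' (f i) = a i) ∧
    (∀ k : ℤ, (∀ i, a i ≤ n → f i ≠ k) → a' k = n + 1)

/-- The list of box labels `p, p+1, …, p+m-1`. -/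
def intervalList (p : ℤ) (m : ℕ) : List ℤ := (List.range m).map (fun j => p + (j : ℤ))

namespace BBSAux

lemma sorted_head_eq {l : List ℕ} (hs : l.Pairwise (· ≤ ·)) {y : ℕ}
    (hy : y ∈ l) (hmin : ∀ z ∈ l, y ≤ z) : l.headI = y := by
  cases l with
  | nil => simp at hy
  | cons z t =>
    simp only [List.headI]
    have h1 : y ≤ z := hmin z (by simp)
    rcases List.mem_cons.mp hy with hy | hy
    · exact hy.symm
    · exact le_antisymm ((List.pairwise_cons.mp hs).1 y hy) h1

lemma carrierOut_eq_of {C : List ℕ} {x y : ℕ} (hs : C.Pairwise (· ≤ ·))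
    (hy : y ∈ C) (hxy : x < y) (hmin : ∀ z ∈ C, x < z → y ≤ z) :
    carrierOut C x = y := by
  have hyf : y ∈ C.filter (fun c => decide (x < c)) := by
    simp [List.mem_filter, hy, hxy]
  unfold carrierOut
  have hsf : (C.filter (fun c => decide (x < c))).Pairwise (· ≤ ·) := hs.filter _
  cases hf : C.filter (fun c => decide (x < c)) with
  | nil => rw [hf] at hyf; simp at hyf
  | cons z t =>
    rw [hf] at hyf hsf
    simp only []
    have hz : z ∈ C.filter (fun c => decide (x < c)) := by rw [hf]; simp
    simp only [List.mem_filter, decide_eq_true_iff] at hz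
    have h1 : y ≤ z := hmin z hz.1 hz.2
    rcases List.mem_cons.mp hyf with hy' | hy'
    · exact hy'.symm
    · exact le_antisymm ((List.pairwise_cons.mp hsf).1 y hy') h1

lemma carrierOut_eq_min {C : List ℕ} {x y : ℕ} (hs : C.Pairwise (· ≤ ·))
    (hle : ∀ z ∈ C, z ≤ x) (hy : y ∈ C) (hmin : ∀ z ∈ C, y ≤ z) :
    carrierOut C x = y := by
  have hf : C.filter (fun c => decide (x < c)) = [] := by
    rw [List.filter_eq_nil_iff]
    intro z hz
    simp only [decide_eq_true_iff]
    exact not_lt.mpr (hle z hz)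
  unfold carrierOut
  rw [hf]
  exact sorted_head_eq hs hy hmin

lemma carrierNext_sorted {C : List ℕ} (hs : C.Pairwise (· ≤ ·)) (x : ℕ) :
    (carrierNext C x).Pairwise (· ≤ ·) :=
  List.Pairwise.orderedInsert _ _ (hs.sublist List.erase_sublist)

lemma carrierNext_coe (C : List ℕ) (x : ℕ) :
    (carrierNext C x : Multiset ℕ) = x ::ₘ ((C : Multiset ℕ).erase (carrierOut C x)) := by
  unfold carrierNext
  rw [Multiset.coe_erase]
  exact Quot.sound (List.perm_orderedInsert _ _ _)

lemma sorted_replicate (n x : ℕ) : (List.replicate n x).Pairwise (· ≤ ·) := by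
  induction n with
  | zero => simp
  | succ n ih =>
    rw [List.replicate_succ]
    exact List.pairwise_cons.mpr ⟨fun b hb => by rw [List.eq_of_mem_replicate hb], ih⟩

lemma intervalList_zero (p : ℤ) : intervalList p 0 = [] := rfl

lemma intervalList_eq (p : ℤ) (m : ℕ) :
    intervalList p m = (List.range m).map (fun j => p + ((j : ℕ) : ℤ)) := by
  unfold intervalList
  simp [bind_pure_comp, ← List.map_eq_flatMap, List.map_map, Function.comp]

lemma intervalList_succ (p : ℤ) (m : ℕ) :
    intervalList p (m + 1) = p :: intervalList (p + 1) m := by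
  rw [intervalList_eq, intervalList_eq, List.range_succ_eq_map, List.map_cons, List.map_map]
  congr 1
  · norm_num
  · exact List.map_congr_left (fun j _ => by simp only [Function.comp_apply]; push_cast; ring)

lemma carrierRun_cons (C : List ℕ) (x : ℕ) (w : List ℕ) :
    carrierRun C (x :: w) =
      ((carrierRun (carrierNext C x) w).1,
        carrierOut C x :: (carrierRun (carrierNext C x) w).2) := rfl

lemma carrierRun_nil (C : List ℕ) : carrierRun C [] = (C, []) := rfl

end BBSAux

open BBSAux in
/-- Equivalence of the original box-ball algorithm and the carrier algorithm:
on an interval `[p, q]` with `p` the smallest occupied label and `q` the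
largest occupied label plus `n`, the output of the carrier algorithm with
initial carrier `(e, …, e)` (`n` copies of `e = n + 1`) is the state after
one step of the original rule, and the final carrier again consists of `n`
copies of `e`. -/
theorem bbs_carrier_algorithm (n : ℕ) (a a' : ℤ → ℕ)
    (ha : BBSState n a) (ha' : BBSState n a') (hev : EvolveTo n a a')
    (p q : ℤ)
    (hp : a p ≤ n ∧ ∀ i, a i ≤ n → p ≤ i)
    (hq : ∃ j, a j ≤ n ∧ (∀ i, a i ≤ n → i ≤ j) ∧ q = j + n) :
    carrierRun (List.replicate n (n + 1))
        ((intervalList p (q - p + 1).toNat).map a)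
      = (List.replicate n (n + 1), (intervalList p (q - p + 1).toNat).map a') := by
  classical
  obtain ⟨f, hdest, hmove, hempty⟩ := hev
  obtain ⟨hb, huniq⟩ := ha
  obtain ⟨jm, hjm, hjmax, hqeq⟩ := hq
  have hn1 : 1 ≤ n := le_trans (hb p).1 hp.1
  -- positions of the colors
  have hexists : ∀ c : ℕ, ∃ i : ℤ, 1 ≤ c → c ≤ n →
      a i = c ∧ ∀ y, a y = c → y = i := by
    intro c
    by_cases h : 1 ≤ c ∧ c ≤ n
    · obtain ⟨i, hi, hu⟩ := huniq c h.1 h.2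
      exact ⟨i, fun _ _ => ⟨hi, hu⟩⟩
    · exact ⟨0, fun h1 h2 => absurd ⟨h1, h2⟩ h⟩
  choose pos hpos using hexists
  have hposa : ∀ c, 1 ≤ c → c ≤ n → a (pos c) = c := fun c h1 h2 => (hpos c h1 h2).1
  have hposu : ∀ c i, 1 ≤ c → c ≤ n → a i = c → i = pos c :=
    fun c i h1 h2 h => (hpos c h1 h2).2 i h
  have hposb : ∀ j, a j ≤ n → pos (a j) = j :=
    fun j hj => (hposu (a j) j (hb j).1 hj rfl).symm
  -- basic facts about f
  have hgt : ∀ j, a j ≤ n → j < f j := fun j hj => ((hdest j hj).1).1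
  have hinj : ∀ j1 j2, a j1 ≤ n → a j2 ≤ n → f j1 = f j2 → j1 = j2 := by
    intro j1 j2 h1 h2 hf
    rcases lt_trichotomy (a j1) (a j2) with h | h | h
    · exact absurd hf ((hdest j2 h2).1.2.2 j1 h1 h)
    · have e1 : j1 = pos (a j1) := hposu _ _ (hb j1).1 h1 rfl
      have e2 : j2 = pos (a j2) := hposu _ _ (hb j2).1 h2 rfl
      rw [e1, e2, h]
    · exact absurd hf.symm ((hdest j1 h1).1.2.2 j2 h2 h)
  have hfle : ∀ j, a j ≤ n → f j ≤ q := by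
    intro j hj
    set S : Finset ℤ := Finset.Icc (jm + 1) (jm + n) with hS
    set D : Finset ℤ := (Finset.Ico 1 (a j)).image (fun c => f (pos c)) with hD
    have hcard : D.card < S.card := by
      have h1 : D.card ≤ (Finset.Ico 1 (a j)).card := Finset.card_image_le
      have h2 : (Finset.Ico 1 (a j)).card = a j - 1 := by simp
      have h3 : S.card = n := by
        rw [hS, Int.card_Icc]
        omega
      have h4 : 1 ≤ a j := (hb j).1
      omega
    obtain ⟨k, hkS, hkD⟩ := Finset.not_subset.mp fun hsub =>
      absurd (Finset.card_le_card hsub) (not_le.mpr hcard)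
    have hk : jm + 1 ≤ k ∧ k ≤ jm + n := Finset.mem_Icc.mp hkS
    have hak : a k = n + 1 := by
      by_contra h
      have h1 : a k ≤ n := by have := (hb k).2; omega
      have := hjmax k h1
      omega
    have hkmem : k ∈ {k : ℤ | j < k ∧ (a k = n + 1 ∨ a k < a j) ∧
        ∀ j', a j' ≤ n → a j' < a j → f j' ≠ k} := by
      refine ⟨lt_of_le_of_lt (hjmax j hj) (by omega), Or.inl hak, ?_⟩
      intro j' h1 h2 hc
      apply hkD
      rw [hD]
      exact Finset.mem_image.mpr ⟨a j', Finset.mem_Ico.mpr ⟨(hb j').1, h2⟩,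
        by rw [hposb j' h1]; exact hc⟩
    have := (hdest j hj).2 hkmem
    omega
  -- the multiset of colors in transit across the boundary just before `s`
  set Fs : ℤ → Finset ℕ :=
    fun s => (Finset.Icc 1 n).filter (fun c => pos c < s ∧ s ≤ f (pos c)) with hFs
  have hFmem : ∀ s c, c ∈ Fs s ↔ (1 ≤ c ∧ c ≤ n) ∧ pos c < s ∧ s ≤ f (pos c) := by
    intro s c
    simp [hFs, Finset.mem_filter, Finset.mem_Icc, and_assoc]
  have hFcard : ∀ s, (Fs s).card ≤ n := by
    intro s
    calc (Fs s).card ≤ (Finset.Icc 1 n).card := Finset.card_filter_le _ _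
    _ = n := by simp
  set M : ℤ → Multiset ℕ :=
    fun s => (Fs s).val + Multiset.replicate (n - (Fs s).card) (n + 1) with hM
  have hMmem : ∀ s z, z ∈ M s → z ∈ Fs s ∨ z = n + 1 := by
    intro s z hz
    rcases Multiset.mem_add.mp hz with h | h
    · exact Or.inl h
    · exact Or.inr (Multiset.eq_of_mem_replicate h)
  have hFmemM : ∀ s c, c ∈ Fs s → c ∈ M s := by
    intro s c hc
    exact Multiset.mem_add.mpr (Or.inl hc)
  -- a ball targeting s is in transit across s with the appropriate color bound
  have htar : ∀ s j, a j ≤ n → f j = s → a j ∈ Fs s ∧ (a s = n + 1 ∨ a s < a j) := by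
    intro s j hj hc
    have hjs : j < s := hc ▸ hgt j hj
    have hcond := (hdest j hj).1.2.1
    rw [hc] at hcond
    refine ⟨(hFmem s (a j)).mpr ⟨⟨(hb j).1, hj⟩, ?_, ?_⟩, hcond⟩
    · rw [hposb j hj]; exact hjs
    · rw [hposb j hj]; omega
  -- the key induction
  have key : ∀ t : ℕ, ∀ s : ℤ, ∀ C : List ℕ, p ≤ s → s + t = q + 1 →
      C.Pairwise (· ≤ ·) → (↑C : Multiset ℕ) = M s →
      carrierRun C ((intervalList s t).map a)
        = (List.replicate n (n + 1), (intervalList s t).map a') := by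
    intro t
    induction t with
    | zero =>
      intro s C hps hst hsort hC
      have hse : s = q + 1 := by push_cast at hst; omega
      have hF0 : Fs s = ∅ := by
        ext c
        simp only [Finset.notMem_empty, iff_false]
        intro hc
        obtain ⟨⟨h1, h2⟩, _, h4⟩ := (hFmem s c).mp hc
        have := hfle (pos c) (by rw [hposa c h1 h2]; exact h2)
        omega
      have hCrep : C = List.replicate n (n + 1) := by
        have hperm : List.Perm C (List.replicate n (n + 1)) := by
          rw [← Multiset.coe_eq_coe, Multiset.coe_replicate, hC, hM]
          simp [hF0]
        exact List.Perm.eq_of_pairwise' hsort (sorted_replicate n (n + 1)) hperm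
      rw [intervalList_zero, List.map_nil, List.map_nil, carrierRun_nil, hCrep]
    | succ t ih =>
      intro s C hps hst hsort hC
      have hsq : s ≤ q := by push_cast at hst; omega
      rw [intervalList_succ, List.map_cons, List.map_cons, carrierRun_cons]
      have hzC : ∀ z ∈ C, z ∈ Fs s ∨ z = n + 1 := by
        intro z hz
        exact hMmem s z (by rw [← hC]; exact Multiset.mem_coe.mpr hz)
      have hstep : carrierOut C (a s) = a' s ∧
          ((carrierNext C (a s) : Multiset ℕ) = M (s + 1)) := by
        by_cases hx : a s ≤ n
        · -- a ball sits at `s`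
          have hxpos : 1 ≤ a s := (hb s).1
          have hposx : pos (a s) = s := hposb s hx
          have hxF : a s ∉ Fs s := by
            intro hmem
            have h := ((hFmem s (a s)).mp hmem).2.1
            rw [hposx] at h
            exact lt_irrefl _ h
          have hcardlt : (Fs s).card < n := by
            have hsub : Fs s ⊆ (Finset.Icc 1 n).erase (a s) := by
              intro c hc
              refine Finset.mem_erase.mpr ⟨?_, Finset.mem_Icc.mpr
                ⟨((hFmem s c).mp hc).1.1, ((hFmem s c).mp hc).1.2⟩⟩
              rintro rfl
              exact hxF hc
            have h1 := Finset.card_le_card hsub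
            have h2 : ((Finset.Icc 1 n).erase (a s)).card = n - 1 := by
              rw [Finset.card_erase_of_mem (Finset.mem_Icc.mpr ⟨hxpos, hx⟩)]
              simp
            omega
          have hep : (n + 1 : ℕ) ∈ C := by
            rw [← Multiset.mem_coe, hC, hM]
            exact Multiset.mem_add.mpr (Or.inr
              (Multiset.mem_replicate.mpr ⟨by omega, rfl⟩))
          set G := (Fs s).filter (fun c => a s < c) with hG'
          by_cases hG : G.Nonempty
          · -- some ball in transit has larger color: it lands at `s`
            set d := G.min' hG with hd
            obtain ⟨hdF, hdgt⟩ := Finset.mem_filter.mp (G.min'_mem hG)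
            obtain ⟨⟨hd1, hdn⟩, hdpos, hdf⟩ := (hFmem s d).mp hdF
            have hapd : a (pos d) = d := hposa d hd1 hdn
            have hdmin : ∀ c ∈ Fs s, a s < c → d ≤ c :=
              fun c hc h => G.min'_le c (Finset.mem_filter.mpr ⟨hc, h⟩)
            have hfd : f (pos d) = s := by
              have hmem : s ∈ {k : ℤ | pos d < k ∧ (a k = n + 1 ∨ a k < a (pos d)) ∧
                  ∀ j, a j ≤ n → a j < a (pos d) → f j ≠ k} := by
                refine ⟨hdpos, Or.inr (by rw [hapd]; exact hdgt), ?_⟩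
                intro j hj hlt hc
                obtain ⟨hjF, hcond⟩ := htar s j hj hc
                have h2 : a s < a j := by
                  rcases hcond with h | h
                  · omega
                  · exact h
                have := hdmin (a j) hjF h2
                rw [hapd] at hlt
                omega
              have := (hdest (pos d) (by rw [hapd]; exact hdn)).2 hmem
              omega
            have ha's : a' s = d := by
              rw [← hfd, hmove (pos d) (by rw [hapd]; exact hdn), hapd]
            have hdC : d ∈ C := by
              rw [← Multiset.mem_coe, hC]
              exact hFmemM s d hdF
            have hout : carrierOut C (a s) = d := by
              apply carrierOut_eq_of hsort hdC hdgt
              intro z hz hltz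
              rcases hzC z hz with h | h
              · exact hdmin z h hltz
              · omega
            have hF' : Fs (s + 1) = insert (a s) ((Fs s).erase d) := by
              ext c
              rw [hFmem, Finset.mem_insert, Finset.mem_erase, hFmem]
              constructor
              · rintro ⟨⟨h1, h2⟩, h3, h4⟩
                by_cases hcx : c = a s
                · exact Or.inl hcx
                · refine Or.inr ⟨?_, ⟨h1, h2⟩, ?_, by omega⟩
                  · rintro rfl
                    omega
                  · have hne : pos c ≠ s := fun he => hcx (by rw [← hposa c h1 h2, he])
                    omega
              · rintro (rfl | ⟨hcd, ⟨h1, h2⟩, h3, h4⟩)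
                · refine ⟨⟨hxpos, hx⟩, by rw [hposx]; omega, ?_⟩
                  rw [hposx]
                  have := hgt s hx
                  omega
                · refine ⟨⟨h1, h2⟩, by omega, ?_⟩
                  rcases lt_or_eq_of_le h4 with h | h
                  · omega
                  · exfalso
                    have hpp : pos c = pos d :=
                      hinj (pos c) (pos d) (by rw [hposa c h1 h2]; exact h2)
                        (by rw [hapd]; exact hdn) (by rw [hfd, ← h])
                    apply hcd
                    rw [← hposa c h1 h2, hpp, hapd]
            have hxFe : a s ∉ (Fs s).erase d := fun hmem => hxF (Finset.mem_of_mem_erase hmem)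
            have hcards : (Fs (s + 1)).card = (Fs s).card := by
              rw [hF', Finset.card_insert_of_notMem hxFe, Finset.card_erase_of_mem hdF]
              have : 1 ≤ (Fs s).card := Finset.card_pos.mpr ⟨d, hdF⟩
              omega
            refine ⟨by rw [hout, ha's], ?_⟩
            have hMs1 : M (s + 1) = (a s ::ₘ (Fs s).val.erase d) +
                Multiset.replicate (n - (Fs s).card) (n + 1) := by
              rw [hM]
              simp only []
              rw [hcards, hF', Finset.insert_val_of_notMem hxFe, Finset.erase_val]
            rw [carrierNext_coe, hout, hC, hMs1, hM]
            simp only []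
            rw [Multiset.erase_add_left_pos _ hdF, Multiset.cons_add]
          · -- no ball in transit has larger color: the ball loads, `e` unloads
            have hnog : ∀ c ∈ Fs s, ¬ a s < c := by
              intro c hc h
              exact hG ⟨c, Finset.mem_filter.mpr ⟨hc, h⟩⟩
            have hnotar : ∀ j, a j ≤ n → f j ≠ s := by
              intro j hj hc
              obtain ⟨hjF, hcond⟩ := htar s j hj hc
              have h2 : a s < a j := by
                rcases hcond with h | h
                · omega
                · exact h
              exact hnog (a j) hjF h2
            have ha's : a' s = n + 1 := hempty s hnotar
            have hout : carrierOut C (a s) = n + 1 := by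
              apply carrierOut_eq_of hsort hep (by omega)
              intro z hz hltz
              rcases hzC z hz with h | h
              · exact absurd hltz (hnog z h)
              · omega
            have hF' : Fs (s + 1) = insert (a s) (Fs s) := by
              ext c
              rw [hFmem, Finset.mem_insert, hFmem]
              constructor
              · rintro ⟨⟨h1, h2⟩, h3, h4⟩
                by_cases hcx : c = a s
                · exact Or.inl hcx
                · refine Or.inr ⟨⟨h1, h2⟩, ?_, by omega⟩
                  have hne : pos c ≠ s := fun he => hcx (by rw [← hposa c h1 h2, he])
                  omega
              · rintro (rfl | ⟨⟨h1, h2⟩, h3, h4⟩)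
                · refine ⟨⟨hxpos, hx⟩, by rw [hposx]; omega, ?_⟩
                  rw [hposx]
                  have := hgt s hx
                  omega
                · refine ⟨⟨h1, h2⟩, by omega, ?_⟩
                  have hne : f (pos c) ≠ s := hnotar (pos c) (by rw [hposa c h1 h2]; exact h2)
                  omega
            have hcards : (Fs (s + 1)).card = (Fs s).card + 1 := by
              rw [hF', Finset.card_insert_of_notMem hxF]
            refine ⟨by rw [hout, ha's], ?_⟩
            have hMs1 : M (s + 1) = (a s ::ₘ (Fs s).val) +
                Multiset.replicate (n - (Fs s).card - 1) (n + 1) := by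
              rw [hM]
              simp only []
              rw [hcards, hF', Finset.insert_val_of_notMem hxF]
              have he : n - ((Fs s).card + 1) = n - (Fs s).card - 1 := by omega
              rw [he]
            rw [carrierNext_coe, hout, hC, hMs1, hM]
            simp only []
            have hk : n - (Fs s).card = (n - (Fs s).card - 1) + 1 := by omega
            rw [hk, Multiset.replicate_succ,
              Multiset.erase_add_right_pos _ (Multiset.mem_cons_self _ _),
              Multiset.erase_cons_head, Multiset.cons_add]
            simp
        · -- the box at `s` is empty
          have hxe : a s = n + 1 := by
            have := (hb s).2
            omega
          by_cases hF : (Fs s).Nonempty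
          · -- the smallest ball in transit lands at `s`
            set d := (Fs s).min' hF with hd
            have hdF : d ∈ Fs s := (Fs s).min'_mem hF
            obtain ⟨⟨hd1, hdn⟩, hdpos, hdf⟩ := (hFmem s d).mp hdF
            have hapd : a (pos d) = d := hposa d hd1 hdn
            have hdmin : ∀ c ∈ Fs s, d ≤ c := fun c hc => (Fs s).min'_le c hc
            have hfd : f (pos d) = s := by
              have hmem : s ∈ {k : ℤ | pos d < k ∧ (a k = n + 1 ∨ a k < a (pos d)) ∧
                  ∀ j, a j ≤ n → a j < a (pos d) → f j ≠ k} := by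
                refine ⟨hdpos, Or.inl hxe, ?_⟩
                intro j hj hlt hc
                obtain ⟨hjF, _⟩ := htar s j hj hc
                have := hdmin (a j) hjF
                rw [hapd] at hlt
                omega
              have := (hdest (pos d) (by rw [hapd]; exact hdn)).2 hmem
              omega
            have ha's : a' s = d := by
              rw [← hfd, hmove (pos d) (by rw [hapd]; exact hdn), hapd]
            have hdC : d ∈ C := by
              rw [← Multiset.mem_coe, hC]
              exact hFmemM s d hdF
            have hout : carrierOut C (a s) = d := by
              apply carrierOut_eq_min hsort ?_ hdC ?_
              · intro z hz
                rcases hzC z hz with h | h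
                · have := ((hFmem s z).mp h).1.2
                  omega
                · omega
              · intro z hz
                rcases hzC z hz with h | h
                · exact hdmin z h
                · omega
            have hF' : Fs (s + 1) = (Fs s).erase d := by
              ext c
              rw [hFmem, Finset.mem_erase, hFmem]
              constructor
              · rintro ⟨⟨h1, h2⟩, h3, h4⟩
                refine ⟨?_, ⟨h1, h2⟩, ?_, by omega⟩
                · rintro rfl
                  omega
                · have hne : pos c ≠ s := by
                    intro he
                    have := hposa c h1 h2
                    rw [he] at this
                    omega
                  omega
              · rintro ⟨hcd, ⟨h1, h2⟩, h3, h4⟩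
                refine ⟨⟨h1, h2⟩, by omega, ?_⟩
                rcases lt_or_eq_of_le h4 with h | h
                · omega
                · exfalso
                  have hpp : pos c = pos d :=
                    hinj (pos c) (pos d) (by rw [hposa c h1 h2]; exact h2)
                      (by rw [hapd]; exact hdn) (by rw [hfd, ← h])
                  apply hcd
                  rw [← hposa c h1 h2, hpp, hapd]
            have hcard1 : 1 ≤ (Fs s).card := Finset.card_pos.mpr ⟨d, hdF⟩
            have hcards : (Fs (s + 1)).card = (Fs s).card - 1 := by
              rw [hF', Finset.card_erase_of_mem hdF]
            refine ⟨by rw [hout, ha's], ?_⟩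
            have hMs1 : M (s + 1) = (Fs s).val.erase d +
                Multiset.replicate ((n - (Fs s).card) + 1) (n + 1) := by
              rw [hM]
              simp only []
              rw [hcards, hF', Finset.erase_val]
              have hce := hFcard s
              have he : n - ((Fs s).card - 1) = (n - (Fs s).card) + 1 := by omega
              rw [he]
            rw [carrierNext_coe, hout, hC, hMs1, hM]
            simp only []
            rw [Multiset.erase_add_left_pos _ hdF, hxe, Multiset.replicate_succ]
            rw [add_comm ((Fs s).val.erase d), ← Multiset.cons_add, add_comm]
          · -- nothing in transit and the box is empty
            have hFe : Fs s = ∅ := Finset.not_nonempty_iff_eq_empty.mp hF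
            have hnotar : ∀ j, a j ≤ n → f j ≠ s := by
              intro j hj hc
              obtain ⟨hjF, _⟩ := htar s j hj hc
              rw [hFe] at hjF
              exact absurd hjF (Finset.notMem_empty _)
            have ha's : a' s = n + 1 := hempty s hnotar
            have hCrep : (C : Multiset ℕ) = Multiset.replicate n (n + 1) := by
              rw [hC, hM]
              simp [hFe]
            have hep' : (n + 1 : ℕ) ∈ C := by
              rw [← Multiset.mem_coe, hCrep]
              exact Multiset.mem_replicate.mpr ⟨by omega, rfl⟩
            have hout : carrierOut C (a s) = n + 1 := by
              apply carrierOut_eq_min hsort ?_ hep' ?_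
              · intro z hz
                have : z = n + 1 := Multiset.eq_of_mem_replicate
                  (by rw [← hCrep]; exact Multiset.mem_coe.mpr hz)
                omega
              · intro z hz
                have : z = n + 1 := Multiset.eq_of_mem_replicate
                  (by rw [← hCrep]; exact Multiset.mem_coe.mpr hz)
                omega
            have hF' : Fs (s + 1) = ∅ := by
              ext c
              simp only [Finset.notMem_empty, iff_false]
              intro hc
              obtain ⟨⟨h1, h2⟩, h3, h4⟩ := (hFmem (s + 1) c).mp hc
              by_cases hpc : pos c = s
              · have := hposa c h1 h2
                rw [hpc] at this
                omega
              · have hmem : c ∈ Fs s := (hFmem s c).mpr ⟨⟨h1, h2⟩, by omega, by omega⟩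
                rw [hFe] at hmem
                exact absurd hmem (Finset.notMem_empty _)
            refine ⟨by rw [hout, ha's], ?_⟩
            rw [carrierNext_coe, hout, hCrep, hxe, hM]
            simp only [hF']
            simp only [Finset.empty_val, Multiset.empty_eq_zero, Finset.card_empty,
              Nat.sub_zero, zero_add]
            rw [Multiset.cons_erase]
            exact Multiset.mem_replicate.mpr ⟨by omega, rfl⟩
      have hrec := ih (s + 1) (carrierNext C (a s)) (by omega)
        (by push_cast at hst ⊢; omega) (carrierNext_sorted hsort _) hstep.2
      rw [hrec, hstep.1]
  have hFp : Fs p = ∅ := by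
    ext c
    simp only [Finset.notMem_empty, iff_false]
    intro hc
    obtain ⟨⟨h1, h2⟩, h3, _⟩ := (hFmem p c).mp hc
    have := hp.2 (pos c) (by rw [hposa c h1 h2]; exact h2)
    omega
  have hpq : (p : ℤ) + ((q - p + 1).toNat : ℤ) = q + 1 := by
    have h1 := hp.2 jm hjm
    omega
  refine key _ p (List.replicate n (n + 1)) le_rfl hpq (sorted_replicate n (n + 1)) ?_
  rw [hM]
  simp [hFp, Multiset.coe_replicate]
end

section
/- Reversibility of the standard box-ball system: one step of the box-ball time evolution is a bijection on the set of states; its inverse is given by the mirror-image algorithm in which the roles of left and right are exchanged and the balls are moved in the reversed color order n, n-1, ..., 1. -/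
/-- The mirror-image destination map: for each occupied box `i`, `g i` is the
greatest box `k < i` that is empty or occupied by a ball of larger color, and
is not the destination of a ball of larger color (colors processed in
reversed order `n, n-1, …, 1`, moving to the left). -/
def IsDestBack (n : ℕ) (a : ℤ → ℕ) (g : ℤ → ℤ) : Prop :=
  ∀ i, a i ≤ n →
    IsGreatest {k : ℤ | k < i ∧ (a k = n + 1 ∨ (a i < a k ∧ a k ≤ n)) ∧
      ∀ j, a j ≤ n → a i < a j → g j ≠ k} (g i)

/-- One step of the mirror-image (backward) box-ball evolution. -/
def BackEvolveTo (n : ℕ) (a a' : ℤ → ℕ) : Prop :=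
  ∃ g : ℤ → ℤ, IsDestBack n a g ∧
    (∀ i, a i ≤ n → a' (g i) = a i) ∧
    (∀ k : ℤ, (∀ i, a i ≤ n → g i ≠ k) → a' k = n + 1)

open Classical in
noncomputable def ballPos (a : ℤ → ℕ) (c : ℕ) : ℤ :=
  if h : ∃ i, a i = c then h.choose else 0

lemma ballPos_spec {a : ℤ → ℕ} {c : ℕ} (h : ∃ i, a i = c) : a (ballPos a c) = c := by
  rw [ballPos, dif_pos h]; exact h.choose_spec

lemma ballPos_exists {n : ℕ} {a : ℤ → ℕ} (h : BBSState n a) {c : ℕ} (hc1 : 1 ≤ c)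
    (hc2 : c ≤ n) : ∃ i, a i = c := by
  obtain ⟨i, hi, -⟩ := h.2 c hc1 hc2; exact ⟨i, hi⟩

lemma ballPos_uniq {n : ℕ} {a : ℤ → ℕ} (h : BBSState n a) {c : ℕ} (hc1 : 1 ≤ c)
    (hc2 : c ≤ n) {i : ℤ} (hi : a i = c) : i = ballPos a c := by
  obtain ⟨j, -, huniq⟩ := h.2 c hc1 hc2
  rw [huniq i hi, huniq _ (ballPos_spec ⟨i, hi⟩)]

lemma exists_bound_above {n : ℕ} {a : ℤ → ℕ} (h : BBSState n a) (d : ℕ → ℤ) (i0 : ℤ) :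
    ∃ k : ℤ, i0 < k ∧ a k = n + 1 ∧ ∀ c, 1 ≤ c → c ≤ n → d c ≠ k := by
  classical
  set F : Finset ℤ :=
    ((Finset.Icc 1 n).image (ballPos a)) ∪ ((Finset.Icc 1 n).image d) ∪ {i0} with hF
  have hne : F.Nonempty := ⟨i0, by simp [hF]⟩
  set M := F.max' hne with hM
  refine ⟨M + 1, ?_, ?_, ?_⟩
  · have : i0 ≤ M := Finset.le_max' F i0 (by simp [hF])
    omega
  · by_contra hcon
    have h1 := (h.1 (M + 1)).1
    have h2 := (h.1 (M + 1)).2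
    have hball : a (M + 1) ≤ n := by omega
    have := ballPos_uniq h h1 hball rfl
    have hmem : ballPos a (a (M + 1)) ∈ F := by
      simp only [hF, Finset.mem_union, Finset.mem_image]
      exact Or.inl (Or.inl ⟨a (M + 1), by simp [Finset.mem_Icc]; omega, rfl⟩)
    have := Finset.le_max' F _ hmem
    omega
  · intro c hc1 hc2 hcon
    have hmem : d c ∈ F := by
      simp only [hF, Finset.mem_union, Finset.mem_image]
      exact Or.inl (Or.inr ⟨c, by simp [Finset.mem_Icc]; omega, rfl⟩)
    have := Finset.le_max' F _ hmem
    omega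

lemma exists_bound_below {n : ℕ} {a : ℤ → ℕ} (h : BBSState n a) (d : ℕ → ℤ) (i0 : ℤ) :
    ∃ k : ℤ, k < i0 ∧ a k = n + 1 ∧ ∀ c, 1 ≤ c → c ≤ n → d c ≠ k := by
  classical
  set F : Finset ℤ :=
    ((Finset.Icc 1 n).image (ballPos a)) ∪ ((Finset.Icc 1 n).image d) ∪ {i0} with hF
  have hne : F.Nonempty := ⟨i0, by simp [hF]⟩
  set M := F.min' hne with hM
  refine ⟨M - 1, ?_, ?_, ?_⟩
  · have : M ≤ i0 := Finset.min'_le F i0 (by simp [hF])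
    omega
  · by_contra hcon
    have h1 := (h.1 (M - 1)).1
    have h2 := (h.1 (M - 1)).2
    have hball : a (M - 1) ≤ n := by omega
    have := ballPos_uniq h h1 hball rfl
    have hmem : ballPos a (a (M - 1)) ∈ F := by
      simp only [hF, Finset.mem_union, Finset.mem_image]
      exact Or.inl (Or.inl ⟨a (M - 1), by simp [Finset.mem_Icc]; omega, rfl⟩)
    have := Finset.min'_le F _ hmem
    omega
  · intro c hc1 hc2 hcon
    have hmem : d c ∈ F := by
      simp only [hF, Finset.mem_union, Finset.mem_image]
      exact Or.inl (Or.inr ⟨c, by simp [Finset.mem_Icc]; omega, rfl⟩)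
    have := Finset.min'_le F _ hmem
    omega

def fwdSet (n : ℕ) (a : ℤ → ℕ) (d : ℕ → ℤ) (c : ℕ) : Set ℤ :=
  {k | ballPos a c < k ∧ (a k = n + 1 ∨ a k < c) ∧ ∀ c', 1 ≤ c' → c' < c → d c' ≠ k}

lemma exists_partial_fwd {n : ℕ} {a : ℤ → ℕ} (h : BBSState n a) :
    ∀ c : ℕ, ∃ d : ℕ → ℤ, ∀ c', 1 ≤ c' → c' ≤ n → c' ≤ c →
      IsLeast (fwdSet n a d c') (d c') := by
  intro c
  induction c with
  | zero => exact ⟨fun _ => 0, fun c' h1 _ h0 => absurd h0 (by omega)⟩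
  | succ c ih =>
    obtain ⟨d, hd⟩ := ih
    by_cases hn : c + 1 ≤ n
    · -- extend at color c+1
      have hne : ∃ k, k ∈ fwdSet n a d (c + 1) := by
        obtain ⟨k, hk1, hk2, hk3⟩ := exists_bound_above h d (ballPos a (c + 1))
        exact ⟨k, hk1, Or.inl hk2, fun c' h1 h2 => hk3 c' h1 (by omega)⟩
      have hbdd : ∃ b : ℤ, ∀ k, k ∈ fwdSet n a d (c + 1) → b ≤ k := by
        exact ⟨ballPos a (c + 1), fun k hk => le_of_lt hk.1⟩
      obtain ⟨lb, hlb, hlbmin⟩ := Int.exists_least_of_bdd hbdd hne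
      refine ⟨Function.update d (c + 1) lb, ?_⟩
      intro c' h1 h2 h3
      have hset : ∀ c'', c'' ≤ c + 1 →
          fwdSet n a (Function.update d (c + 1) lb) c'' = fwdSet n a d c'' := by
        intro c'' hc''
        unfold fwdSet
        ext k
        simp only [Set.mem_setOf_eq]
        constructor
        · rintro ⟨p1, p2, p3⟩
          exact ⟨p1, p2, fun e he1 he2 => by
            have := p3 e he1 he2
            rwa [Function.update_of_ne (by omega)] at this⟩
        · rintro ⟨p1, p2, p3⟩
          exact ⟨p1, p2, fun e he1 he2 => by
            rw [Function.update_of_ne (by omega)]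
            exact p3 e he1 he2⟩
      rcases Nat.lt_or_ge c' (c + 1) with hlt | hge
      · rw [hset c' (by omega), Function.update_of_ne (by omega)]
        exact hd c' h1 h2 (by omega)
      · have : c' = c + 1 := by omega
        subst this
        rw [hset (c + 1) le_rfl, Function.update_self]
        exact ⟨hlb, hlbmin⟩
    · exact ⟨d, fun c' h1 h2 _ => hd c' h1 h2 (by omega)⟩

lemma exists_isDest {n : ℕ} {a : ℤ → ℕ} (h : BBSState n a) : ∃ f, IsDest n a f := by
  obtain ⟨d, hd⟩ := exists_partial_fwd h n
  refine ⟨fun i => d (a i), ?_⟩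
  intro i hi
  have h1 : 1 ≤ a i := (h.1 i).1
  have hkey := hd (a i) h1 hi hi
  have hp : ballPos a (a i) = i := (ballPos_uniq h h1 hi rfl).symm
  have hset : {k : ℤ | i < k ∧ (a k = n + 1 ∨ a k < a i) ∧
      ∀ j, a j ≤ n → a j < a i → (fun i => d (a i)) j ≠ k} = fwdSet n a d (a i) := by
    unfold fwdSet
    rw [hp]
    ext k
    simp only [Set.mem_setOf_eq]
    constructor
    · rintro ⟨p1, p2, p3⟩
      refine ⟨p1, p2, fun c' h1' h2' => ?_⟩
      obtain ⟨j, hj⟩ := ballPos_exists h h1' (by omega)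
      have := p3 j (by omega) (by omega)
      simpa [hj] using this
    · rintro ⟨p1, p2, p3⟩
      exact ⟨p1, p2, fun j hj1 hj2 => p3 (a j) (h.1 j).1 hj2⟩
  rw [hset]
  exact hkey

lemma isDest_unique {n : ℕ} {a : ℤ → ℕ} (h : BBSState n a) {f f' : ℤ → ℤ}
    (hf : IsDest n a f) (hf' : IsDest n a f') : ∀ i, a i ≤ n → f i = f' i := by
  have H : ∀ c : ℕ, ∀ i, a i ≤ n → a i < c → f i = f' i := by
    intro c
    induction c with
    | zero => intro i _ h0; omega
    | succ c ih =>
      intro i hi hlt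
      rcases Nat.lt_or_ge (a i) c with hc | hc
      · exact ih i hi hc
      · have hset : {k : ℤ | i < k ∧ (a k = n + 1 ∨ a k < a i) ∧
            ∀ j, a j ≤ n → a j < a i → f j ≠ k} =
            {k : ℤ | i < k ∧ (a k = n + 1 ∨ a k < a i) ∧
            ∀ j, a j ≤ n → a j < a i → f' j ≠ k} := by
          ext k
          simp only [Set.mem_setOf_eq]
          constructor
          · rintro ⟨p1, p2, p3⟩
            exact ⟨p1, p2, fun j hj1 hj2 => (ih j hj1 (by omega)) ▸ p3 j hj1 hj2⟩
          · rintro ⟨p1, p2, p3⟩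
            exact ⟨p1, p2, fun j hj1 hj2 => (ih j hj1 (by omega)).symm ▸ p3 j hj1 hj2⟩
        have h1 := hf i hi
        rw [hset] at h1
        exact h1.unique (hf' i hi)
  exact fun i hi => H (a i + 1) i hi (by omega)

lemma isDest_inj {n : ℕ} {a : ℤ → ℕ} (h : BBSState n a) {f : ℤ → ℤ}
    (hf : IsDest n a f) {i j : ℤ} (hi : a i ≤ n) (hj : a j ≤ n) (hij : i ≠ j) :
    f i ≠ f j := by
  have hcol : a i ≠ a j := by
    intro hc
    obtain ⟨m, -, huniq⟩ := h.2 (a i) (h.1 i).1 hi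
    exact hij ((huniq i rfl).trans (huniq j hc.symm).symm)
  rcases Nat.lt_or_ge (a i) (a j) with hlt | hge
  · exact fun hcon => (hf j hj).1.2.2 i hi hlt hcon
  · exact fun hcon => (hf i hi).1.2.2 j hj (by omega) hcon.symm

open Classical in
noncomputable def evolved (n : ℕ) (a : ℤ → ℕ) (f : ℤ → ℤ) : ℤ → ℕ :=
  fun k => if h : ∃ i, a i ≤ n ∧ f i = k then a h.choose else n + 1

lemma evolved_spec {n : ℕ} {a : ℤ → ℕ} (h : BBSState n a) {f : ℤ → ℤ}
    (hf : IsDest n a f) {i : ℤ} (hi : a i ≤ n) : evolved n a f (f i) = a i := by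
  have he : ∃ i', a i' ≤ n ∧ f i' = f i := ⟨i, hi, rfl⟩
  rw [evolved, dif_pos he]
  obtain ⟨h1, h2⟩ := he.choose_spec
  by_cases heq : he.choose = i
  · rw [heq]
  · exact absurd h2 (isDest_inj h hf h1 hi heq)

lemma evolved_empty {n : ℕ} {a : ℤ → ℕ} {f : ℤ → ℤ} {k : ℤ}
    (hk : ∀ i, a i ≤ n → f i ≠ k) : evolved n a f k = n + 1 := by
  rw [evolved, dif_neg]
  rintro ⟨i, hi, hfi⟩
  exact hk i hi hfi

lemma evolved_state {n : ℕ} {a : ℤ → ℕ} (h : BBSState n a) {f : ℤ → ℤ}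
    (hf : IsDest n a f) : BBSState n (evolved n a f) := by
  constructor
  · intro k
    rw [evolved]
    split
    · rename_i he
      have := (h.1 he.choose).1
      have := he.choose_spec.1
      omega
    · omega
  · intro c hc1 hc2
    obtain ⟨i, hi⟩ := ballPos_exists h hc1 hc2
    have hile : a i ≤ n := by omega
    refine ⟨f i, by show evolved n a f (f i) = c; rw [evolved_spec h hf hile, hi], ?_⟩
    intro k hk
    have hne : ∃ i', a i' ≤ n ∧ f i' = k := by
      by_contra hcon
      push_neg at hcon
      rw [evolved_empty (fun i' hi' => hcon i' hi')] at hk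
      omega
    obtain ⟨i', hi', hfi'⟩ := hne
    have : evolved n a f k = a i' := by rw [← hfi', evolved_spec h hf hi']
    have hai' : a i' = c := by omega
    have : i' = i := by
      obtain ⟨m, -, huniq⟩ := h.2 c hc1 hc2
      rw [huniq i' hai', huniq i hi]
    rw [← hfi', this]

lemma evolveTo_evolved {n : ℕ} {a : ℤ → ℕ} (h : BBSState n a) {f : ℤ → ℤ}
    (hf : IsDest n a f) : EvolveTo n a (evolved n a f) :=
  ⟨f, hf, fun i hi => evolved_spec h hf hi, fun k hk => evolved_empty hk⟩

lemma evolveTo_unique {n : ℕ} {a : ℤ → ℕ} (h : BBSState n a) {b b' : ℤ → ℕ}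
    (hb : EvolveTo n a b) (hb' : EvolveTo n a b') : b = b' := by
  obtain ⟨f, hf, hb1, hb2⟩ := hb
  obtain ⟨f', hf', hb1', hb2'⟩ := hb'
  have heq := isDest_unique h hf hf'
  funext k
  by_cases hk : ∃ i, a i ≤ n ∧ f i = k
  · obtain ⟨i, hi, hfi⟩ := hk
    rw [← hfi, hb1 i hi, heq i hi, hb1' i hi]
  · push_neg at hk
    rw [hb2 k hk, hb2' k (fun i hi => heq i hi ▸ hk i hi)]

lemma evolve_back {n : ℕ} {a a' : ℤ → ℕ} (h : BBSState n a)
    (he : EvolveTo n a a') : BackEvolveTo n a' a := by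
  classical
  obtain ⟨f, hf, he1, he2⟩ := he
  -- every occupied box of a' is the image of a unique ball
  have himg : ∀ k, a' k ≤ n → ∃ i, a i ≤ n ∧ f i = k := by
    intro k hk
    by_contra hcon
    push_neg at hcon
    have := he2 k (fun i hi => hcon i hi)
    omega
  set g : ℤ → ℤ := fun k => if hx : ∃ i, a i ≤ n ∧ f i = k then hx.choose else k with hg
  have hgspec : ∀ k, a' k ≤ n → a (g k) ≤ n ∧ f (g k) = k := by
    intro k hk
    have hx := himg k hk
    simp only [hg, dif_pos hx]
    exact hx.choose_spec
  have hgf : ∀ i, a i ≤ n → g (f i) = i := by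
    intro i hi
    have hx : ∃ i', a i' ≤ n ∧ f i' = f i := ⟨i, hi, rfl⟩
    simp only [hg, dif_pos hx]
    obtain ⟨h1, h2⟩ := hx.choose_spec
    by_contra hne
    exact isDest_inj h hf h1 hi hne h2
  have haval : ∀ k, a' k ≤ n → a (g k) = a' k := by
    intro k hk
    obtain ⟨h1, h2⟩ := hgspec k hk
    conv_rhs => rw [← h2]
    rw [he1 (g k) h1]
  refine ⟨g, ?_, haval, ?_⟩
  · -- IsDestBack n a' g
    intro k hk
    obtain ⟨hgball, hgfk⟩ := hgspec k hk
    set i := g k with hi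
    have hak : a' k = a i := by rw [← hgfk, he1 i hgball]
    constructor
    · -- membership
      refine ⟨?_, ?_, ?_⟩
      · rw [← hgfk]; exact (hf i hgball).1.1
      · by_cases hii : ∃ m, a m ≤ n ∧ f m = i
        · obtain ⟨m, hm, hfm⟩ := hii
          have hvi : a' i = a m := by rw [← hfm, he1 m hm]
          have hmem := (hf m hm).1
          rw [hfm] at hmem
          have : a i = n + 1 ∨ a i < a m := hmem.2.1
          have : a i < a m := by rcases this with h' | h' <;> omega
          right
          constructor
          · omega
          · omega
        · push_neg at hii
          left
          exact he2 i (fun m hm => hii m hm)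
      · intro j hj hlt hgj
        obtain ⟨hj1, hj2⟩ := hgspec j hj
        rw [hgj] at hj2
        rw [hgfk] at hj2
        subst hj2
        omega
    · -- upper bound
      intro m hm
      obtain ⟨hmk, hm2, hm3⟩ := hm
      by_contra hcon
      push_neg at hcon
      have him : i < m := hcon
      by_cases hmball : a m ≤ n
      · by_cases horder : a i < a m
        · -- m occupied by a larger ball: use third condition of T at j = f m
          have hj : a' (f m) = a m := he1 m hmball
          have hgfm : g (f m) = m := hgf m hmball
          exact hm3 (f m) (by omega) (by omega) hgfm
        · -- a m < a i: m was eligible for ball i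
          have hne : a m ≠ a i := by
            intro hc
            obtain ⟨m', -, huniq⟩ := h.2 (a m) (h.1 m).1 hmball
            have : m = i := (huniq m rfl).trans (huniq i hc.symm).symm
            omega
          have hmlt : a m < a i := by omega
          have hmem : m ∈ {k' : ℤ | i < k' ∧ (a k' = n + 1 ∨ a k' < a i) ∧
              ∀ j, a j ≤ n → a j < a i → f j ≠ k'} := by
            refine ⟨him, Or.inr hmlt, ?_⟩
            intro j hj hjlt hfj
            have : a' m = a j := by rw [← hfj, he1 j hj]
            rcases hm2 with h' | h' <;> omega
          have := (hf i hgball).2 hmem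
          rw [hgfk] at this
          omega
      · -- m empty in a: eligible for ball i
        have hmem : m ∈ {k' : ℤ | i < k' ∧ (a k' = n + 1 ∨ a k' < a i) ∧
            ∀ j, a j ≤ n → a j < a i → f j ≠ k'} := by
          have hm1 : a m = n + 1 := by have := (h.1 m).2; omega
          refine ⟨him, Or.inl hm1, ?_⟩
          intro j hj hjlt hfj
          have : a' m = a j := by rw [← hfj, he1 j hj]
          rcases hm2 with h' | h' <;> omega
        have := (hf i hgball).2 hmem
        rw [hgfk] at this
        omega
  · -- boxes with no incoming backward ball are empty in a
    intro m hcon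
    by_contra hne
    have hm : a m ≤ n := by have := (h.1 m).2; omega
    have h1 : a' (f m) = a m := he1 m hm
    exact hcon (f m) (by omega) (hgf m hm)

def bwdSet (n : ℕ) (a : ℤ → ℕ) (d : ℕ → ℤ) (c : ℕ) : Set ℤ :=
  {k | k < ballPos a c ∧ (a k = n + 1 ∨ (c < a k ∧ a k ≤ n)) ∧
    ∀ c', c < c' → c' ≤ n → d c' ≠ k}

lemma exists_partial_bwd {n : ℕ} {a : ℤ → ℕ} (h : BBSState n a) :
    ∀ t : ℕ, ∃ d : ℕ → ℤ, ∀ c', 1 ≤ c' → c' ≤ n → n < c' + t →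
      IsGreatest (bwdSet n a d c') (d c') := by
  intro t
  induction t with
  | zero => exact ⟨fun _ => 0, fun c' _ h2 h0 => absurd h0 (by omega)⟩
  | succ t ih =>
    obtain ⟨d, hd⟩ := ih
    by_cases hn : t < n
    · set c0 := n - t with hc0
      have hne : ∃ k, k ∈ bwdSet n a d c0 := by
        obtain ⟨k, hk1, hk2, hk3⟩ := exists_bound_below h d (ballPos a c0)
        exact ⟨k, hk1, Or.inl hk2, fun c' h1 h2 => hk3 c' (by omega) h2⟩
      have hbdd : ∃ b : ℤ, ∀ k, k ∈ bwdSet n a d c0 → k ≤ b :=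
        ⟨ballPos a c0, fun k hk => le_of_lt hk.1⟩
      obtain ⟨ub, hub, hubmax⟩ := Int.exists_greatest_of_bdd hbdd hne
      refine ⟨Function.update d c0 ub, ?_⟩
      intro c' h1 h2 h3
      have hset : ∀ c'', c0 ≤ c'' →
          bwdSet n a (Function.update d c0 ub) c'' = bwdSet n a d c'' := by
        intro c'' hc''
        unfold bwdSet
        ext k
        simp only [Set.mem_setOf_eq]
        constructor
        · rintro ⟨p1, p2, p3⟩
          exact ⟨p1, p2, fun e he1 he2 => by
            have := p3 e he1 he2
            rwa [Function.update_of_ne (by omega)] at this⟩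
        · rintro ⟨p1, p2, p3⟩
          exact ⟨p1, p2, fun e he1 he2 => by
            rw [Function.update_of_ne (by omega)]
            exact p3 e he1 he2⟩
      rcases Nat.lt_or_ge n (c' + t) with hlt | hge
      · rw [hset c' (by omega), Function.update_of_ne (by omega)]
        exact hd c' h1 h2 (by omega)
      · have : c' = c0 := by omega
        subst this
        rw [hset c0 le_rfl, Function.update_self]
        exact ⟨hub, hubmax⟩
    · exact ⟨d, fun c' h1 h2 _ => hd c' h1 h2 (by omega)⟩

lemma exists_isDestBack {n : ℕ} {a : ℤ → ℕ} (h : BBSState n a) :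
    ∃ g, IsDestBack n a g := by
  obtain ⟨d, hd⟩ := exists_partial_bwd h n
  refine ⟨fun i => d (a i), ?_⟩
  intro i hi
  have h1 : 1 ≤ a i := (h.1 i).1
  have hkey := hd (a i) h1 hi (by omega)
  have hp : ballPos a (a i) = i := (ballPos_uniq h h1 hi rfl).symm
  have hset : {k : ℤ | k < i ∧ (a k = n + 1 ∨ (a i < a k ∧ a k ≤ n)) ∧
      ∀ j, a j ≤ n → a i < a j → (fun i => d (a i)) j ≠ k} = bwdSet n a d (a i) := by
    unfold bwdSet
    rw [hp]
    ext k
    simp only [Set.mem_setOf_eq]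
    constructor
    · rintro ⟨p1, p2, p3⟩
      refine ⟨p1, p2, fun c' h1' h2' => ?_⟩
      obtain ⟨j, hj⟩ := ballPos_exists h (by omega) h2'
      have := p3 j (by omega) (by omega)
      simpa [hj] using this
    · rintro ⟨p1, p2, p3⟩
      exact ⟨p1, p2, fun j hj1 hj2 => p3 (a j) hj2 hj1⟩
  rw [hset]
  exact hkey

lemma isDestBack_unique {n : ℕ} {a : ℤ → ℕ} (h : BBSState n a) {g g' : ℤ → ℤ}
    (hg : IsDestBack n a g) (hg' : IsDestBack n a g') : ∀ i, a i ≤ n → g i = g' i := by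
  have H : ∀ t : ℕ, ∀ i, a i ≤ n → n < a i + t → g i = g' i := by
    intro t
    induction t with
    | zero => intro i hi h0; omega
    | succ t ih =>
      intro i hi hlt
      rcases Nat.lt_or_ge n (a i + t) with hc | hc
      · exact ih i hi hc
      · have hset : {k : ℤ | k < i ∧ (a k = n + 1 ∨ (a i < a k ∧ a k ≤ n)) ∧
            ∀ j, a j ≤ n → a i < a j → g j ≠ k} =
            {k : ℤ | k < i ∧ (a k = n + 1 ∨ (a i < a k ∧ a k ≤ n)) ∧
            ∀ j, a j ≤ n → a i < a j → g' j ≠ k} := by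
          ext k
          simp only [Set.mem_setOf_eq]
          constructor
          · rintro ⟨p1, p2, p3⟩
            exact ⟨p1, p2, fun j hj1 hj2 => (ih j hj1 (by omega)) ▸ p3 j hj1 hj2⟩
          · rintro ⟨p1, p2, p3⟩
            exact ⟨p1, p2, fun j hj1 hj2 => (ih j hj1 (by omega)).symm ▸ p3 j hj1 hj2⟩
        have h1 := hg i hi
        rw [hset] at h1
        exact h1.unique (hg' i hi)
  exact fun i hi => H (n + 1) i hi (by have := (h.1 i).1; omega)

lemma isDestBack_inj {n : ℕ} {a : ℤ → ℕ} (h : BBSState n a) {g : ℤ → ℤ}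
    (hg : IsDestBack n a g) {i j : ℤ} (hi : a i ≤ n) (hj : a j ≤ n) (hij : i ≠ j) :
    g i ≠ g j := by
  have hcol : a i ≠ a j := by
    intro hc
    obtain ⟨m, -, huniq⟩ := h.2 (a i) (h.1 i).1 hi
    exact hij ((huniq i rfl).trans (huniq j hc.symm).symm)
  rcases Nat.lt_or_ge (a i) (a j) with hlt | hge
  · exact fun hcon => (hg i hi).1.2.2 j hj hlt hcon.symm
  · exact fun hcon => (hg j hj).1.2.2 i hi (by omega) hcon

open Classical in
noncomputable def backEvolved (n : ℕ) (a : ℤ → ℕ) (g : ℤ → ℤ) : ℤ → ℕ :=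
  fun k => if h : ∃ i, a i ≤ n ∧ g i = k then a h.choose else n + 1

lemma backEvolved_spec {n : ℕ} {a : ℤ → ℕ} (h : BBSState n a) {g : ℤ → ℤ}
    (hg : IsDestBack n a g) {i : ℤ} (hi : a i ≤ n) : backEvolved n a g (g i) = a i := by
  have he : ∃ i', a i' ≤ n ∧ g i' = g i := ⟨i, hi, rfl⟩
  rw [backEvolved, dif_pos he]
  obtain ⟨h1, h2⟩ := he.choose_spec
  by_cases heq : he.choose = i
  · rw [heq]
  · exact absurd h2 (isDestBack_inj h hg h1 hi heq)

lemma backEvolved_empty {n : ℕ} {a : ℤ → ℕ} {g : ℤ → ℤ} {k : ℤ}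
    (hk : ∀ i, a i ≤ n → g i ≠ k) : backEvolved n a g k = n + 1 := by
  rw [backEvolved, dif_neg]
  rintro ⟨i, hi, hgi⟩
  exact hk i hi hgi

lemma backEvolved_state {n : ℕ} {a : ℤ → ℕ} (h : BBSState n a) {g : ℤ → ℤ}
    (hg : IsDestBack n a g) : BBSState n (backEvolved n a g) := by
  constructor
  · intro k
    rw [backEvolved]
    split
    · rename_i he
      have := (h.1 he.choose).1
      have := he.choose_spec.1
      omega
    · omega
  · intro c hc1 hc2
    obtain ⟨i, hi⟩ := ballPos_exists h hc1 hc2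
    have hile : a i ≤ n := by omega
    refine ⟨g i, by show backEvolved n a g (g i) = c; rw [backEvolved_spec h hg hile, hi], ?_⟩
    intro k hk
    have hne : ∃ i', a i' ≤ n ∧ g i' = k := by
      by_contra hcon
      push_neg at hcon
      rw [backEvolved_empty (fun i' hi' => hcon i' hi')] at hk
      omega
    obtain ⟨i', hi', hgi'⟩ := hne
    have : backEvolved n a g k = a i' := by rw [← hgi', backEvolved_spec h hg hi']
    have hai' : a i' = c := by omega
    have : i' = i := by
      obtain ⟨m, -, huniq⟩ := h.2 c hc1 hc2
      rw [huniq i' hai', huniq i hi]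
    rw [← hgi', this]

lemma backEvolveTo_backEvolved {n : ℕ} {a : ℤ → ℕ} (h : BBSState n a) {g : ℤ → ℤ}
    (hg : IsDestBack n a g) : BackEvolveTo n a (backEvolved n a g) :=
  ⟨g, hg, fun i hi => backEvolved_spec h hg hi, fun k hk => backEvolved_empty hk⟩

lemma backEvolveTo_unique {n : ℕ} {a : ℤ → ℕ} (h : BBSState n a) {b b' : ℤ → ℕ}
    (hb : BackEvolveTo n a b) (hb' : BackEvolveTo n a b') : b = b' := by
  obtain ⟨g, hg, hb1, hb2⟩ := hb
  obtain ⟨g', hg', hb1', hb2'⟩ := hb'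
  have heq := isDestBack_unique h hg hg'
  funext k
  by_cases hk : ∃ i, a i ≤ n ∧ g i = k
  · obtain ⟨i, hi, hgi⟩ := hk
    rw [← hgi, hb1 i hi, heq i hi, hb1' i hi]
  · push_neg at hk
    rw [hb2 k hk, hb2' k (fun i hi => heq i hi ▸ hk i hi)]

lemma back_evolve {n : ℕ} {a a' : ℤ → ℕ} (h : BBSState n a')
    (he : BackEvolveTo n a' a) : EvolveTo n a a' := by
  classical
  obtain ⟨g, hg, he1, he2⟩ := he
  have himg : ∀ m, a m ≤ n → ∃ k, a' k ≤ n ∧ g k = m := by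
    intro m hm
    by_contra hcon
    push_neg at hcon
    have := he2 m (fun k hk => hcon k hk)
    omega
  set f : ℤ → ℤ := fun m => if hx : ∃ k, a' k ≤ n ∧ g k = m then hx.choose else m with hf
  have hfspec : ∀ m, a m ≤ n → a' (f m) ≤ n ∧ g (f m) = m := by
    intro m hm
    have hx := himg m hm
    simp only [hf, dif_pos hx]
    exact hx.choose_spec
  have hfg : ∀ k, a' k ≤ n → f (g k) = k := by
    intro k hk
    have hx : ∃ k', a' k' ≤ n ∧ g k' = g k := ⟨k, hk, rfl⟩
    simp only [hf, dif_pos hx]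
    obtain ⟨h1, h2⟩ := hx.choose_spec
    by_contra hne
    exact isDestBack_inj h hg h1 hk hne h2
  have haval : ∀ m, a m ≤ n → a' (f m) = a m := by
    intro m hm
    obtain ⟨h1, h2⟩ := hfspec m hm
    conv_rhs => rw [← h2]
    rw [he1 (f m) h1]
  refine ⟨f, ?_, haval, ?_⟩
  · -- IsDest n a f
    intro m hm
    obtain ⟨hfball, hgfm⟩ := hfspec m hm
    set k := f m with hk
    have ham : a m = a' k := by rw [← hgfm, he1 k hfball]
    constructor
    · -- membership
      refine ⟨?_, ?_, ?_⟩
      · conv_lhs => rw [← hgfm]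
        exact (hg k hfball).1.1
      · by_cases hkk : ∃ j', a' j' ≤ n ∧ g j' = k
        · obtain ⟨j', hj', hgj'⟩ := hkk
          have hvk : a k = a' j' := by rw [← hgj', he1 j' hj']
          have hmem := (hg j' hj').1
          rw [hgj'] at hmem
          have hdisj : a' k = n + 1 ∨ (a' j' < a' k ∧ a' k ≤ n) := hmem.2.1
          have : a' j' < a' k := by rcases hdisj with h' | h' <;> [omega; omega]
          right; omega
        · push_neg at hkk
          left
          exact he2 k (fun j' hj' => hkk j' hj')
      · intro j hj hjlt hfj
        obtain ⟨hj1, hj2⟩ := hfspec j hj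
        rw [hfj] at hj2
        rw [hgfm] at hj2
        subst hj2
        omega
    · -- lower bound
      intro m' hm'
      obtain ⟨hmm', hm'2, hm'3⟩ := hm'
      by_contra hcon
      push_neg at hcon
      have hm'k : m' < k := hcon
      by_cases hm'ball : a' m' ≤ n
      · by_cases horder : a' m' < a' k
        · -- m' occupied in a' by a smaller ball: use third condition of S_m at j = g m'
          have hj : a (g m') = a' m' := he1 m' hm'ball
          have hfgm' : f (g m') = m' := hfg m' hm'ball
          exact hm'3 (g m') (by omega) (by omega) hfgm'
        · -- a' k < a' m': m' eligible for backward ball at k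
          have hne : a' m' ≠ a' k := by
            intro hc
            obtain ⟨l, -, huniq⟩ := h.2 (a' m') (h.1 m').1 hm'ball
            have : m' = k := (huniq m' rfl).trans (huniq k hc.symm).symm
            omega
          have hklt : a' k < a' m' := by omega
          have hmem : m' ∈ {l : ℤ | l < k ∧ (a' l = n + 1 ∨ (a' k < a' l ∧ a' l ≤ n)) ∧
              ∀ j, a' j ≤ n → a' k < a' j → g j ≠ l} := by
            refine ⟨hm'k, Or.inr ⟨hklt, hm'ball⟩, ?_⟩
            intro j hj hjlt hgj
            have : a m' = a' j := by rw [← hgj, he1 j hj]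
            rcases hm'2 with h' | h' <;> omega
          have := (hg k hfball).2 hmem
          rw [hgfm] at this
          omega
      · -- m' empty in a'
        have hmem : m' ∈ {l : ℤ | l < k ∧ (a' l = n + 1 ∨ (a' k < a' l ∧ a' l ≤ n)) ∧
            ∀ j, a' j ≤ n → a' k < a' j → g j ≠ l} := by
          have hm1 : a' m' = n + 1 := by have := (h.1 m').2; omega
          refine ⟨hm'k, Or.inl hm1, ?_⟩
          intro j hj hjlt hgj
          have : a m' = a' j := by rw [← hgj, he1 j hj]
          rcases hm'2 with h' | h' <;> omega
        have := (hg k hfball).2 hmem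
        rw [hgfm] at this
        omega
  · -- boxes not hit by any ball are empty in a'
    intro k' hcon
    by_contra hne
    have hk' : a' k' ≤ n := by have := (h.1 k').2; omega
    have h1 : a (g k') = a' k' := he1 k' hk'
    exact hcon (g k') (by omega) (hfg k' hk')


/-- Reversibility of the standard box-ball system: one step of the time
evolution is a bijection on states, and its inverse is the mirror-image
algorithm with the roles of left and right exchanged and the colors processed
in reversed order. -/
theorem bbs_reversible (n : ℕ) :
    (∀ a, BBSState n a → ∃! a', BBSState n a' ∧ EvolveTo n a a') ∧
    (∀ a', BBSState n a' → ∃! a, BBSState n a ∧ EvolveTo n a a') ∧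
    (∀ a a', BBSState n a → BBSState n a' →
      (EvolveTo n a a' ↔ BackEvolveTo n a' a)) := by
  refine ⟨?_, ?_, ?_⟩
  · intro a ha
    obtain ⟨f, hf⟩ := exists_isDest ha
    refine ⟨evolved n a f, ⟨evolved_state ha hf, evolveTo_evolved ha hf⟩, ?_⟩
    rintro b ⟨-, hb⟩
    exact evolveTo_unique ha hb (evolveTo_evolved ha hf)
  · intro a' ha'
    obtain ⟨g, hg⟩ := exists_isDestBack ha'
    have hst := backEvolved_state ha' hg
    have hback := backEvolveTo_backEvolved ha' hg
    refine ⟨backEvolved n a' g, ⟨hst, back_evolve ha' hback⟩, ?_⟩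
    rintro b ⟨hbst, hbe⟩
    exact backEvolveTo_unique ha' (evolve_back hbst hbe) hback
  · intro a a' ha ha'
    exact ⟨fun he => evolve_back ha he, fun he => back_evolve ha' he⟩
end
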